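/- arXiv:2101.00976 — 2 statements merged into one kernel-verified Lean document; each statement's English description precedes it below -/
import Mathlib

section
/- Let g : ℝ × ℝ → ℝ be twice continuously differentiable (C²) and define F on ℝ² \ {0} by F(x₁,x₂) = g(x₁, x) where x = √(x₁² + x₂²). Then at every point (x₁,x₂) ≠ (0,0), ΔF = g₁₁(x₁,x) + g₂₂(x₁,x) + 2·(x₁/x)·g₁₂(x₁,x) + (1/x)·g₂(x₁,x), where gᵢ and gᵢⱼ denote first and second partial derivatives of g with respect to its i-th (and j-th) argument (the Laplacian in the nested rectangular coordinate system (x₁, x)). -/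
/-- The Laplacian `∂²F/∂x₁² + ∂²F/∂x₂²` of a function `F : ℝ → ℝ → ℝ`
(curried function of two real variables) at the point `(a, b)`. -/
noncomputable def lap2 (F : ℝ → ℝ → ℝ) (a b : ℝ) : ℝ :=
  deriv (fun s => deriv (fun u => F u b) s) a +
  deriv (fun s => deriv (fun u => F a u) s) b

/-- Partial derivative of `g : ℝ × ℝ → ℝ` with respect to its first argument. -/
noncomputable def pd1 (g : ℝ × ℝ → ℝ) (p : ℝ × ℝ) : ℝ :=
  deriv (fun t => g (t, p.2)) p.1

/-- Partial derivative of `g : ℝ × ℝ → ℝ` with respect to its second argument. -/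
noncomputable def pd2 (g : ℝ × ℝ → ℝ) (p : ℝ × ℝ) : ℝ :=
  deriv (fun t => g (p.1, t)) p.2

/-! Along each coordinate line `F` is `g` composed with a `C²` plane curve `s ↦ (u s, w s)`, and
the chain rule together with the symmetry of mixed partials gives its second derivative as
`g₁₁ u'² + 2 g₁₂ u' w' + g₂₂ w'² + g₁ u'' + g₂ w''`. With `x = √(x₁² + x₂²)`, the `x₁`-line is
`(s, √(s² + x₂²))`, with `u' = 1`, `w' = x₁ / x`, `w'' = x₂² / x³`, and the `x₂`-line is
`(x₁, √(s² + x₁²))`, with `u' = 0`, `w' = x₂ / x`, `w'' = x₁² / x³`. Adding the two and using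
`x₁² + x₂² = x²` gives the formula. -/

open Filter Topology

lemma fderiv_clm_apply_const {𝕜 E F G : Type*} [NontriviallyNormedField 𝕜]
    [NormedAddCommGroup E] [NormedSpace 𝕜 E] [NormedAddCommGroup F] [NormedSpace 𝕜 F]
    [NormedAddCommGroup G] [NormedSpace 𝕜 G] {c : E → F →L[𝕜] G} {x : E}
    (hc : DifferentiableAt 𝕜 c x) (v : F) (w : E) :
    fderiv 𝕜 (fun y => c y v) x w = fderiv 𝕜 c x w v := by
  simp [fderiv_clm_apply hc (differentiableAt_const v)]

section PartialDerivatives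

variable {g : ℝ × ℝ → ℝ}

lemma pd1_eq_fderiv_apply {p : ℝ × ℝ} (hg : DifferentiableAt ℝ g p) :
    pd1 g p = fderiv ℝ g p (1, 0) := by
  have := hg.hasFDerivAt.comp_hasDerivAt p.1
    ((hasDerivAt_id p.1).prodMk (hasDerivAt_const p.1 p.2))
  simpa [pd1, Function.comp_def] using this.deriv

lemma pd2_eq_fderiv_apply {p : ℝ × ℝ} (hg : DifferentiableAt ℝ g p) :
    pd2 g p = fderiv ℝ g p (0, 1) := by
  have := hg.hasFDerivAt.comp_hasDerivAt p.2
    ((hasDerivAt_const p.2 p.1).prodMk (hasDerivAt_id p.2))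
  simpa [pd2, Function.comp_def] using this.deriv

lemma pd1_eq_fderiv (hg : Differentiable ℝ g) : pd1 g = fun p => fderiv ℝ g p (1, 0) :=
  funext fun p => pd1_eq_fderiv_apply (hg p)

lemma pd2_eq_fderiv (hg : Differentiable ℝ g) : pd2 g = fun p => fderiv ℝ g p (0, 1) :=
  funext fun p => pd2_eq_fderiv_apply (hg p)

lemma ContDiff.pd1 {n : WithTop ℕ∞} (hg : ContDiff ℝ (n + 1) g) : ContDiff ℝ n (pd1 g) := by
  rw [pd1_eq_fderiv (hg.differentiable (by simp))]
  exact (hg.fderiv_right le_rfl).clm_apply contDiff_const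

lemma ContDiff.pd2 {n : WithTop ℕ∞} (hg : ContDiff ℝ (n + 1) g) : ContDiff ℝ n (pd2 g) := by
  rw [pd2_eq_fderiv (hg.differentiable (by simp))]
  exact (hg.fderiv_right le_rfl).clm_apply contDiff_const

lemma pd1_pd2_eq_pd2_pd1 (hg : ContDiff ℝ 2 g) (p : ℝ × ℝ) :
    pd1 (pd2 g) p = pd2 (pd1 g) p := by
  have hd := hg.differentiable two_ne_zero
  have hd1 : Differentiable ℝ (pd1 g) := (hg.pd1 (n := 1)).differentiable one_ne_zero
  have hd2 : Differentiable ℝ (pd2 g) := (hg.pd2 (n := 1)).differentiable one_ne_zero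
  have hdd : Differentiable ℝ (fderiv ℝ g) :=
    (hg.fderiv_right (m := 1) le_rfl).differentiable one_ne_zero
  rw [pd1_eq_fderiv_apply (hd2 p), pd2_eq_fderiv_apply (hd1 p), pd1_eq_fderiv hd,
    pd2_eq_fderiv hd, fderiv_clm_apply_const (hdd p), fderiv_clm_apply_const (hdd p)]
  exact hg.contDiffAt.isSymmSndFDerivAt (by simp) _ _

lemma hasDerivAt_comp_prodMk {u w : ℝ → ℝ} {u' w' t : ℝ} (hg : DifferentiableAt ℝ g (u t, w t))
    (hu : HasDerivAt u u' t) (hw : HasDerivAt w w' t) :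
    HasDerivAt (fun s => g (u s, w s)) (pd1 g (u t, w t) * u' + pd2 g (u t, w t) * w') t := by
  refine (hg.hasFDerivAt.comp_hasDerivAt t (hu.prodMk hw)).congr_deriv ?_
  have hsplit : ((u', w') : ℝ × ℝ) = u' • (1, 0) + w' • (0, 1) := by simp
  rw [pd1_eq_fderiv_apply hg, pd2_eq_fderiv_apply hg, hsplit, map_add, map_smul, map_smul,
    smul_eq_mul, smul_eq_mul, mul_comm u', mul_comm w']

lemma hasDerivAt_deriv_comp_prodMk (hg : ContDiff ℝ 2 g) {u w u' w' : ℝ → ℝ} {u'' w'' t : ℝ}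
    (hu : ∀ᶠ s in 𝓝 t, HasDerivAt u (u' s) s) (hw : ∀ᶠ s in 𝓝 t, HasDerivAt w (w' s) s)
    (hu' : HasDerivAt u' u'' t) (hw' : HasDerivAt w' w'' t) :
    HasDerivAt (deriv fun s => g (u s, w s))
      (pd1 (pd1 g) (u t, w t) * u' t ^ 2 + 2 * pd2 (pd1 g) (u t, w t) * u' t * w' t +
        pd2 (pd2 g) (u t, w t) * w' t ^ 2 + pd1 g (u t, w t) * u'' +
        pd2 g (u t, w t) * w'') t := by
  have hd := hg.differentiable two_ne_zero
  have hd1 := (hg.pd1 (n := 1)).differentiable one_ne_zero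
  have hd2 := (hg.pd2 (n := 1)).differentiable one_ne_zero
  have hfirst : deriv (fun s => g (u s, w s)) =ᶠ[𝓝 t]
      fun s => pd1 g (u s, w s) * u' s + pd2 g (u s, w s) * w' s := by
    filter_upwards [hu, hw] with s hus hws
    exact (hasDerivAt_comp_prodMk (hd _) hus hws).deriv
  have h1 := hasDerivAt_comp_prodMk (hd1 _) hu.self_of_nhds hw.self_of_nhds
  have h2 := hasDerivAt_comp_prodMk (hd2 _) hu.self_of_nhds hw.self_of_nhds
  refine (((h1.mul hu').add (h2.mul hw')).congr_of_eventuallyEq hfirst).congr_deriv ?_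
  rw [pd1_pd2_eq_pd2_pd1 hg]
  ring

end PartialDerivatives

lemma hasDerivAt_sqrt_sq_add {c t : ℝ} (h : t ^ 2 + c ≠ 0) :
    HasDerivAt (fun s => √(s ^ 2 + c)) (t / √(t ^ 2 + c)) t := by
  refine (((hasDerivAt_pow 2 t).add_const c).sqrt h).congr_deriv ?_
  field_simp
  ring

lemma hasDerivAt_div_sqrt_sq_add {c t : ℝ} (h : 0 < t ^ 2 + c) :
    HasDerivAt (fun s => s / √(s ^ 2 + c)) (c / √(t ^ 2 + c) ^ 3) t := by
  have hR : 0 < √(t ^ 2 + c) := Real.sqrt_pos.2 h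
  refine ((hasDerivAt_id' t).div (hasDerivAt_sqrt_sq_add h.ne') hR.ne').congr_deriv ?_
  have hsq : √(t ^ 2 + c) ^ 2 = t ^ 2 + c := Real.sq_sqrt h.le
  field_simp
  linear_combination hsq

lemma eventually_hasDerivAt_sqrt_sq_add {c t : ℝ} (h : t ^ 2 + c ≠ 0) :
    ∀ᶠ s in 𝓝 t, HasDerivAt (fun s => √(s ^ 2 + c)) (s / √(s ^ 2 + c)) s :=
  ((by fun_prop : Continuous fun s : ℝ => s ^ 2 + c).continuousAt.eventually_ne h).mono
    fun _ hs => hasDerivAt_sqrt_sq_add hs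

/-- For a `C²` function `g : ℝ × ℝ → ℝ` and
`F (x₁, x₂) = g (x₁, x)` with `x = √(x₁² + x₂²)`, at every `(x₁, x₂) ≠ (0, 0)` the
Laplacian of `F` equals
`g₁₁ + g₂₂ + 2 (x₁/x) g₁₂ + (1/x) g₂` evaluated at `(x₁, x)` —
the Laplacian in the nested rectangular coordinate system `(x₁, x)`. -/
theorem laplacian_nested_coordinates (g : ℝ × ℝ → ℝ) (hg : ContDiff ℝ 2 g)
    (x₁ x₂ : ℝ) (h : (x₁, x₂) ≠ (0, 0)) :
    lap2 (fun a b => g (a, Real.sqrt (a ^ 2 + b ^ 2))) x₁ x₂ =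
      pd1 (pd1 g) (x₁, Real.sqrt (x₁ ^ 2 + x₂ ^ 2)) +
      pd2 (pd2 g) (x₁, Real.sqrt (x₁ ^ 2 + x₂ ^ 2)) +
      2 * (x₁ / Real.sqrt (x₁ ^ 2 + x₂ ^ 2)) *
        pd2 (pd1 g) (x₁, Real.sqrt (x₁ ^ 2 + x₂ ^ 2)) +
      (1 / Real.sqrt (x₁ ^ 2 + x₂ ^ 2)) *
        pd2 g (x₁, Real.sqrt (x₁ ^ 2 + x₂ ^ 2)) := by
  have hpos : 0 < x₁ ^ 2 + x₂ ^ 2 := by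
    contrapose! h
    have : x₁ = 0 ∧ x₂ = 0 := by constructor <;> nlinarith [sq_nonneg x₁, sq_nonneg x₂]
    simp [this]
  have hpos' : 0 < x₂ ^ 2 + x₁ ^ 2 := by linarith
  have e₁ := (hasDerivAt_deriv_comp_prodMk hg (u := fun s => s) (u' := fun _ => 1)
    (.of_forall hasDerivAt_id') (eventually_hasDerivAt_sqrt_sq_add hpos.ne')
    (hasDerivAt_const x₁ 1) (hasDerivAt_div_sqrt_sq_add hpos)).deriv
  have e₂ := (hasDerivAt_deriv_comp_prodMk hg (u := fun _ => x₁) (u' := fun _ => 0)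
    (.of_forall fun _ => hasDerivAt_const _ x₁) (eventually_hasDerivAt_sqrt_sq_add hpos'.ne')
    (hasDerivAt_const x₂ 0) (hasDerivAt_div_sqrt_sq_add hpos')).deriv
  simp only [add_comm (x₂ ^ 2)] at e₂
  have hswap : (fun s => g (x₁, √(x₁ ^ 2 + s ^ 2))) = fun s => g (x₁, √(s ^ 2 + x₁ ^ 2)) := by
    simp only [add_comm (x₁ ^ 2)]
  rw [lap2, e₁, hswap, e₂]
  set x := √(x₁ ^ 2 + x₂ ^ 2)
  have hx : 0 < x := Real.sqrt_pos.2 hpos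
  have hxsq : x ^ 2 = x₁ ^ 2 + x₂ ^ 2 := Real.sq_sqrt hpos.le
  field_simp
  linear_combination (-(x * pd2 (pd2 g) (x₁, x) + pd2 g (x₁, x))) * hxsq
end

section
/- The function F(x₁,x₂,x₃) = x₁·√(x₁² + x₂² + x₃²)/(x₁² + x₂²) is harmonic on the open set {(x₁,x₂,x₃) ∈ ℝ³ : x₁² + x₂² > 0} (ℝ³ with the x₃-axis removed): ΔF = 0 at every such point. -/
/-!
Write `F = r · g` with `r = √(x₁² + x₂² + x₃²)` and `g = x₁ / (x₁² + x₂²)`, and use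
`Δ(r g) = g Δr + 2 ∇r · ∇g + r Δg`, one coordinate at a time. Here `Δr = 2 / r`, while
`g = Re (1 / (x₁ + i x₂))` does not depend on `x₃` and is harmonic, so `Δg = 0`; and
`∇r · ∇g = -x₁ / (r (x₁² + x₂²)) = -g / r` cancels `g Δr / 2`.
-/

/-- The Laplacian `∂²F/∂x₁² + ∂²F/∂x₂² + ∂²F/∂x₃²` of a function `F : ℝ → ℝ → ℝ → ℝ`
(curried function of three real variables) at the point `(a, b, c)`. -/
noncomputable def lap3 (F : ℝ → ℝ → ℝ → ℝ) (a b c : ℝ) : ℝ :=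
  deriv (fun s => deriv (fun u => F u b c) s) a +
  deriv (fun s => deriv (fun u => F a u c) s) b +
  deriv (fun s => deriv (fun u => F a b u) s) c

open Filter Topology

def HasSecondDerivAt (f f' : ℝ → ℝ) (f'' a : ℝ) : Prop :=
  (∀ᶠ x in 𝓝 a, HasDerivAt f (f' x) x) ∧ HasDerivAt f' f'' a

namespace HasSecondDerivAt

variable {f g f' g' : ℝ → ℝ} {f'' g'' a : ℝ}

theorem deriv_deriv (hf : HasSecondDerivAt f f' f'' a) : deriv (deriv f) a = f'' := by
  have : deriv f =ᶠ[𝓝 a] f' := hf.1.mono fun x hx => hx.deriv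
  rw [this.deriv_eq, hf.2.deriv]

theorem mul (hf : HasSecondDerivAt f f' f'' a) (hg : HasSecondDerivAt g g' g'' a) :
    HasSecondDerivAt (fun x => f x * g x) (fun x => f' x * g x + f x * g' x)
      (f'' * g a + 2 * (f' a * g' a) + f a * g'') a := by
  refine ⟨(hf.1.and hg.1).mono fun x hx => hx.1.mul hx.2, ?_⟩
  exact ((hf.2.mul hg.1.self_of_nhds).add (hf.1.self_of_nhds.mul hg.2)).congr_deriv (by ring)

end HasSecondDerivAt

theorem hasSecondDerivAt_const (c a : ℝ) :
    HasSecondDerivAt (fun _ => c) (fun _ => 0) 0 a :=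
  ⟨.of_forall fun x => hasDerivAt_const x c, hasDerivAt_const a 0⟩

theorem hasSecondDerivAt_id (a : ℝ) : HasSecondDerivAt (fun x => x) (fun _ => 1) 0 a :=
  ⟨.of_forall hasDerivAt_id', hasDerivAt_const a 1⟩

section SumOfSquares

variable {k a : ℝ}

theorem hasDerivAt_sqrt_sq_add_s12 (ha : 0 < a ^ 2 + k) :
    HasDerivAt (fun x => √(x ^ 2 + k)) (a / √(a ^ 2 + k)) a := by
  refine (((hasDerivAt_pow 2 a).add_const k).sqrt ha.ne').congr_deriv ?_
  field_simp
  norm_num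

theorem hasDerivAt_div_sqrt_sq_add_s12 (ha : 0 < a ^ 2 + k) :
    HasDerivAt (fun x => x / √(x ^ 2 + k)) (k / ((a ^ 2 + k) * √(a ^ 2 + k))) a := by
  have hr := Real.sqrt_pos.2 ha
  refine ((hasDerivAt_id' a).div (hasDerivAt_sqrt_sq_add_s12 ha) hr.ne').congr_deriv ?_
  field_simp
  rw [Real.sq_sqrt ha.le]
  ring

theorem hasSecondDerivAt_sqrt_sq_add (ha : 0 < a ^ 2 + k) :
    HasSecondDerivAt (fun x => √(x ^ 2 + k)) (fun x => x / √(x ^ 2 + k))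
      (k / ((a ^ 2 + k) * √(a ^ 2 + k))) a := by
  have hpos : ∀ᶠ x in 𝓝 a, 0 < x ^ 2 + k :=
    continuousAt_const.eventually_lt (by fun_prop) ha
  exact ⟨hpos.mono fun x hx => hasDerivAt_sqrt_sq_add_s12 hx, hasDerivAt_div_sqrt_sq_add_s12 ha⟩

theorem hasDerivAt_inv_sq_add (ha : a ^ 2 + k ≠ 0) :
    HasDerivAt (fun x => (x ^ 2 + k)⁻¹) (-(2 * a) / (a ^ 2 + k) ^ 2) a := by
  refine (((hasDerivAt_pow 2 a).add_const k).inv ha).congr_deriv ?_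
  norm_num

theorem hasDerivAt_div_sq_add_sq (ha : a ^ 2 + k ≠ 0) :
    HasDerivAt (fun x => -(2 * x) / (x ^ 2 + k) ^ 2) ((6 * a ^ 2 - 2 * k) / (a ^ 2 + k) ^ 3) a := by
  refine ((((hasDerivAt_id' a).const_mul 2).neg).div (((hasDerivAt_pow 2 a).add_const k).pow 2)
    (pow_ne_zero 2 ha)).congr_deriv ?_
  field_simp
  norm_num
  ring

theorem hasSecondDerivAt_inv_sq_add (ha : a ^ 2 + k ≠ 0) :
    HasSecondDerivAt (fun x => (x ^ 2 + k)⁻¹) (fun x => -(2 * x) / (x ^ 2 + k) ^ 2)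
      ((6 * a ^ 2 - 2 * k) / (a ^ 2 + k) ^ 3) a := by
  have hne : ∀ᶠ x in 𝓝 a, x ^ 2 + k ≠ 0 :=
    (by fun_prop : ContinuousAt (fun x => x ^ 2 + k) a).eventually_ne ha
  exact ⟨hne.mono fun x hx => hasDerivAt_inv_sq_add hx, hasDerivAt_div_sq_add_sq ha⟩

end SumOfSquares

/-- The function
`F (x₁, x₂, x₃) = x₁ √(x₁² + x₂² + x₃²) / (x₁² + x₂²)` is harmonic on `ℝ³` with the
`x₃`-axis removed: its Laplacian vanishes wherever `x₁² + x₂² > 0`. -/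
theorem harmonic_x1_norm_div_planar_normSq (x₁ x₂ x₃ : ℝ) (h : 0 < x₁ ^ 2 + x₂ ^ 2) :
    lap3 (fun a b c =>
        a * Real.sqrt (a ^ 2 + b ^ 2 + c ^ 2) / (a ^ 2 + b ^ 2)) x₁ x₂ x₃ = 0 := by
  have e₁ : (fun u => u * √(u ^ 2 + x₂ ^ 2 + x₃ ^ 2) / (u ^ 2 + x₂ ^ 2))
      = fun u => √(u ^ 2 + (x₂ ^ 2 + x₃ ^ 2)) * (u * (u ^ 2 + x₂ ^ 2)⁻¹) := by
    funext u; rw [add_assoc]; ring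
  have e₂ : (fun u => x₁ * √(x₁ ^ 2 + u ^ 2 + x₃ ^ 2) / (x₁ ^ 2 + u ^ 2))
      = fun u => √(u ^ 2 + (x₁ ^ 2 + x₃ ^ 2)) * (x₁ * (u ^ 2 + x₁ ^ 2)⁻¹) := by
    funext u; rw [show x₁ ^ 2 + u ^ 2 + x₃ ^ 2 = u ^ 2 + (x₁ ^ 2 + x₃ ^ 2) by ring]; ring
  have e₃ : (fun u => x₁ * √(x₁ ^ 2 + x₂ ^ 2 + u ^ 2) / (x₁ ^ 2 + x₂ ^ 2))
      = fun u => √(u ^ 2 + (x₁ ^ 2 + x₂ ^ 2)) * (x₁ / (x₁ ^ 2 + x₂ ^ 2)) := by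
    funext u; rw [add_comm _ (u ^ 2)]; ring
  have hR : 0 < x₁ ^ 2 + (x₂ ^ 2 + x₃ ^ 2) := by linarith [sq_nonneg x₃]
  have hρ : 0 < x₂ ^ 2 + x₁ ^ 2 := by linarith
  have s₁ := hasSecondDerivAt_sqrt_sq_add (k := x₂ ^ 2 + x₃ ^ 2) hR
  have s₂ := hasSecondDerivAt_sqrt_sq_add (a := x₂) (k := x₁ ^ 2 + x₃ ^ 2) (by linarith)
  have s₃ := hasSecondDerivAt_sqrt_sq_add (a := x₃) (k := x₁ ^ 2 + x₂ ^ 2) (by linarith)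
  have g₁ := (hasSecondDerivAt_id x₁).mul (hasSecondDerivAt_inv_sq_add h.ne')
  have g₂ := (hasSecondDerivAt_const x₁ x₂).mul (hasSecondDerivAt_inv_sq_add hρ.ne')
  simp only [lap3]
  rw [e₁, e₂, e₃, (s₁.mul g₁).deriv_deriv, (s₂.mul g₂).deriv_deriv,
    (s₃.mul (hasSecondDerivAt_const _ x₃)).deriv_deriv,
    show x₂ ^ 2 + (x₁ ^ 2 + x₃ ^ 2) = x₁ ^ 2 + (x₂ ^ 2 + x₃ ^ 2) by ring,
    show x₃ ^ 2 + (x₁ ^ 2 + x₂ ^ 2) = x₁ ^ 2 + (x₂ ^ 2 + x₃ ^ 2) by ring, add_comm (x₂ ^ 2) (x₁ ^ 2)]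
  field_simp
  rw [Real.sq_sqrt hR.le]
  ring
end
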